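/- Let d = 1 and γ ∈ (1/2, 3/4), and let ξ ∈ ℝ \ {0}. Then for every bounded measurable function k : [0,∞) → ℝ, ∫_{ℝ} k(|η|/|ξ|) H(η|ξ) dη = ∫_0^∞ k(r) g_{1,γ}(r) dr, where g_{1,γ}(r) = c_{1,γ}(|r − r²|^{2γ−2} + (r + r²)^{2γ−2}). In particular, the pushforward of the probability measure H(η|ξ)dη under η ↦ |η|/|ξ| has Lebesgue density g_{1,γ} on (0,∞). -/

import Mathlib

/-!
Substituting `η = ξ u` turns `H(η|ξ) dη` into `H(u|1) du`, since the powers of `|ξ|` cancel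
(`1 + 2(2γ-2) + (3-4γ) = 0`). Folding the line onto `(0, ∞)` by `u ↦ -u` then gives the density
`H(r|1) + H(-r|1) = c_{1,γ}(|r - r²|^{2γ-2} + (r + r²)^{2γ-2}) = g_{1,γ}(r)` for `|u| = r`.
The identity for real `k` is then the equality of the two measures read through the Bochner
integral, so it needs no integrability of `k`.
-/

open MeasureTheory Set

/-- The constant `c_{1,γ}` (the constant `c_{d,γ}` with `d = 1`). -/
noncomputable def c1g (γ : ℝ) : ℝ :=
  Real.pi ^ (-(1 : ℝ)/2) * Real.Gamma (2*γ - 1) * (Real.Gamma ((1 + 1 - 2*γ)/2))^2 /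
    (Real.Gamma ((1 + 2 - 4*γ)/2) * (Real.Gamma ((2*γ - 1)/2))^2)

/-- `H(η|ξ) = c_{1,γ} |η|^{2γ−2} |ξ−η|^{2γ−2} |ξ|^{3−4γ}` for `d = 1`. -/
noncomputable def H1 (γ : ℝ) (η ξ : ℝ) : ℝ :=
  c1g γ * |η| ^ (2*γ - 1 - 1) * |ξ - η| ^ (2*γ - 1 - 1) * |ξ| ^ (1 + 2 - 4*γ)

/-- The density `g_{1,γ}(r) = c_{1,γ}(|r − r²|^{2γ−2} + (r + r²)^{2γ−2})`. -/
noncomputable def g1 (γ : ℝ) (r : ℝ) : ℝ :=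
  c1g γ * (|r - r^2| ^ (2*γ - 2) + (r + r^2) ^ (2*γ - 2))

section

variable {α β : Type*} [MeasurableSpace α] [MeasurableSpace β]

theorem lintegral_eq_ofReal_abs_mul_lintegral_comp_mul_left {a : ℝ} (ha : a ≠ 0)
    {f : ℝ → ENNReal} (hf : Measurable f) :
    ∫⁻ x, f x = ENNReal.ofReal |a| * ∫⁻ u, f (a * u) := by
  conv_lhs => rw [← Real.smul_map_volume_mul_left ha]
  rw [lintegral_smul_measure, lintegral_map hf (measurable_const_mul a), smul_eq_mul]

theorem lintegral_eq_setLIntegral_Ioi_add_comp_neg {f : ℝ → ENNReal} (hf : Measurable f) :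
    ∫⁻ x, f x = ∫⁻ x in Ioi 0, (f x + f (-x)) := by
  have hneg : ∫⁻ x in Iio 0, f x = ∫⁻ x in Ioi 0, f (-x) := by
    have := (Measure.measurePreserving_neg (volume : Measure ℝ)).setLIntegral_comp_preimage_emb
      (Homeomorph.neg ℝ).measurableEmbedding f (Iio 0)
    rwa [neg_preimage, neg_Iio, neg_zero, eq_comm] at this
  rw [lintegral_add_left' hf.aemeasurable.restrict, ← hneg,
    ← lintegral_add_compl f measurableSet_Ioi, compl_Ioi,
    Measure.restrict_congr_set Iio_ae_eq_Iic.symm]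

theorem integral_withDensity_ofReal {μ : Measure α} {ρ : α → ℝ} (hρ : Measurable ρ)
    (hρ_nonneg : 0 ≤ᵐ[μ] ρ) (g : α → ℝ) :
    ∫ x, g x ∂μ.withDensity (fun x => ENNReal.ofReal (ρ x)) = ∫ x, g x * ρ x ∂μ := by
  rw [integral_withDensity_eq_integral_toReal_smul hρ.ennreal_ofReal
    (ae_of_all _ fun _ => ENNReal.ofReal_lt_top)]
  refine integral_congr_ae ?_
  filter_upwards [hρ_nonneg] with x hx
  rw [ENNReal.toReal_ofReal hx, smul_eq_mul, mul_comm]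

theorem integral_comp_mul_eq_of_map_withDensity {μ : Measure α} {ν : Measure β} {T : α → β}
    (hT : Measurable T) {ρ : α → ℝ} {σ : β → ℝ} (hρ : Measurable ρ) (hσ : Measurable σ)
    (hρ_nonneg : 0 ≤ᵐ[μ] ρ) (hσ_nonneg : 0 ≤ᵐ[ν] σ)
    (h : Measure.map T (μ.withDensity fun x => ENNReal.ofReal (ρ x)) =
      ν.withDensity fun y => ENNReal.ofReal (σ y))
    {k : β → ℝ} (hk : Measurable k) :
    ∫ x, k (T x) * ρ x ∂μ = ∫ y, k y * σ y ∂ν := by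
  rw [← integral_withDensity_ofReal hρ hρ_nonneg, ← integral_withDensity_ofReal hσ hσ_nonneg,
    ← h, integral_map hT.aemeasurable hk.aestronglyMeasurable]

end

lemma c1g_pos {γ : ℝ} (hγ : γ ∈ Ioo (1/2 : ℝ) (3/4 : ℝ)) : 0 < c1g γ := by
  obtain ⟨h1, h2⟩ := hγ
  have := Real.Gamma_pos_of_pos (show 0 < 2*γ - 1 by linarith)
  have := Real.Gamma_pos_of_pos (show 0 < (1 + 1 - 2*γ)/2 by linarith)
  have := Real.Gamma_pos_of_pos (show 0 < (1 + 2 - 4*γ)/2 by linarith)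
  have := Real.Gamma_pos_of_pos (show 0 < (2*γ - 1)/2 by linarith)
  unfold c1g
  positivity

lemma measurable_H1 (γ ξ : ℝ) : Measurable fun η => H1 γ η ξ := by
  unfold H1; fun_prop

lemma measurable_g1 (γ : ℝ) : Measurable (g1 γ) := by
  unfold g1; fun_prop

lemma H1_nonneg {γ : ℝ} (hc : 0 ≤ c1g γ) (η ξ : ℝ) : 0 ≤ H1 γ η ξ := by
  unfold H1; positivity

lemma g1_nonneg {γ r : ℝ} (hc : 0 ≤ c1g γ) (hr : 0 < r) : 0 ≤ g1 γ r := by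
  unfold g1; positivity

lemma abs_mul_H1_mul_left (γ : ℝ) {ξ : ℝ} (hξ : ξ ≠ 0) (u : ℝ) :
    |ξ| * H1 γ (ξ * u) ξ = H1 γ u 1 := by
  have hξ' : 0 < |ξ| := abs_pos.mpr hξ
  have hpow : |ξ| * (|ξ| ^ (2*γ - 1 - 1) * |ξ| ^ (2*γ - 1 - 1) * |ξ| ^ (1 + 2 - 4*γ)) = 1 := by
    nth_rewrite 1 [← Real.rpow_one |ξ|]
    rw [← Real.rpow_add hξ', ← Real.rpow_add hξ', ← Real.rpow_add hξ',
      show (1 : ℝ) + (2*γ - 1 - 1 + (2*γ - 1 - 1) + (1 + 2 - 4*γ)) = 0 by ring, Real.rpow_zero]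
  unfold H1
  rw [show ξ - ξ * u = ξ * (1 - u) by ring, abs_mul, abs_mul,
    Real.mul_rpow (abs_nonneg _) (abs_nonneg _), Real.mul_rpow (abs_nonneg _) (abs_nonneg _),
    abs_one, Real.one_rpow]
  linear_combination (c1g γ * |u| ^ (2*γ - 1 - 1) * |1 - u| ^ (2*γ - 1 - 1)) * hpow

lemma g1_eq_H1_add_H1_neg (γ : ℝ) {r : ℝ} (hr : 0 < r) : g1 γ r = H1 γ r 1 + H1 γ (-r) 1 := by
  have h₁ : |r - r^2| = |r| * |1 - r| := by rw [← abs_mul]; ring_nf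
  have h₂ : r + r^2 = |-r| * |1 - -r| := by
    rw [abs_neg, abs_of_pos hr, abs_of_pos (by linarith)]; ring
  unfold g1 H1
  rw [h₁, h₂, Real.mul_rpow (abs_nonneg _) (abs_nonneg _),
    Real.mul_rpow (abs_nonneg _) (abs_nonneg _), abs_one, Real.one_rpow]
  ring_nf

theorem lintegral_comp_abs_div_mul_H1 {γ : ℝ} (hc : 0 ≤ c1g γ) {ξ : ℝ} (hξ : ξ ≠ 0)
    {k : ℝ → ENNReal} (hk : Measurable k) :
    ∫⁻ η, ENNReal.ofReal (H1 γ η ξ) * k (|η| / |ξ|) =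
      ∫⁻ r in Ioi 0, ENNReal.ofReal (g1 γ r) * k r := by
  have hG : Measurable fun u => ENNReal.ofReal (H1 γ u 1) * k |u| :=
    (measurable_H1 γ 1).ennreal_ofReal.mul (hk.comp measurable_abs)
  calc ∫⁻ η, ENNReal.ofReal (H1 γ η ξ) * k (|η| / |ξ|)
      = ∫⁻ u, ENNReal.ofReal (H1 γ u 1) * k |u| := by
        rw [lintegral_eq_ofReal_abs_mul_lintegral_comp_mul_left hξ
          (f := fun η => ENNReal.ofReal (H1 γ η ξ) * k (|η| / |ξ|))
          ((measurable_H1 γ ξ).ennreal_ofReal.mul (hk.comp (measurable_abs.div_const _))),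
          ← lintegral_const_mul' _ _ ENNReal.ofReal_ne_top]
        refine lintegral_congr fun u => ?_
        rw [← mul_assoc, ← ENNReal.ofReal_mul (abs_nonneg ξ), abs_mul_H1_mul_left γ hξ,
          abs_mul, mul_div_cancel_left₀ _ (abs_ne_zero.mpr hξ)]
    _ = ∫⁻ r in Ioi 0, ENNReal.ofReal (g1 γ r) * k r := by
        rw [lintegral_eq_setLIntegral_Ioi_add_comp_neg hG]
        refine setLIntegral_congr_fun measurableSet_Ioi fun r (hr : 0 < r) => ?_
        rw [abs_neg, abs_of_pos hr, ← add_mul, g1_eq_H1_add_H1_neg γ hr,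
          ENNReal.ofReal_add (H1_nonneg hc _ _) (H1_nonneg hc _ _)]

theorem map_abs_div_withDensity_H1 {γ : ℝ} (hc : 0 ≤ c1g γ) {ξ : ℝ} (hξ : ξ ≠ 0) :
    Measure.map (fun η : ℝ => |η| / |ξ|)
        ((volume : Measure ℝ).withDensity fun η => ENNReal.ofReal (H1 γ η ξ)) =
      ((volume : Measure ℝ).restrict (Ioi 0)).withDensity fun r => ENNReal.ofReal (g1 γ r) := by
  refine Measure.ext_of_lintegral _ fun k hk => ?_
  rw [lintegral_map hk (measurable_abs.div_const _),
    lintegral_withDensity_eq_lintegral_mul _ (measurable_H1 γ ξ).ennreal_ofReal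
      (g := fun η => k (|η| / |ξ|)) (hk.comp (measurable_abs.div_const _)),
    lintegral_withDensity_eq_lintegral_mul _ (measurable_g1 γ).ennreal_ofReal hk]
  exact lintegral_comp_abs_div_mul_H1 hc hξ hk

theorem stmt2 (γ : ℝ) (hγ : γ ∈ Set.Ioo (1/2 : ℝ) (3/4 : ℝ)) (ξ : ℝ) (hξ : ξ ≠ 0) :
    (∀ k : ℝ → ℝ, Measurable k → (∃ C : ℝ, ∀ x, |k x| ≤ C) →
      ∫ η : ℝ, k (|η| / |ξ|) * H1 γ η ξ = ∫ r in Set.Ioi (0 : ℝ), k r * g1 γ r) ∧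
    Measure.map (fun η : ℝ => |η| / |ξ|)
        ((volume : Measure ℝ).withDensity fun η => ENNReal.ofReal (H1 γ η ξ)) =
      ((volume : Measure ℝ).restrict (Set.Ioi 0)).withDensity
        fun r => ENNReal.ofReal (g1 γ r) := by
  have hc : 0 ≤ c1g γ := (c1g_pos hγ).le
  have hmap := map_abs_div_withDensity_H1 hc hξ
  refine ⟨fun k hk _ => ?_, hmap⟩
  have hg1_nonneg : 0 ≤ᵐ[volume.restrict (Ioi 0)] g1 γ :=
    (ae_restrict_iff' measurableSet_Ioi).mpr (ae_of_all _ fun _ => g1_nonneg hc)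
  exact integral_comp_mul_eq_of_map_withDensity (measurable_abs.div_const _) (measurable_H1 γ ξ)
    (measurable_g1 γ) (ae_of_all _ (H1_nonneg hc · ξ)) hg1_nonneg hmap hk
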